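/- arXiv:cs/0512051 — 7 statements merged into one kernel-verified Lean document; each statement's English description precedes it below -/
import Mathlib

section
/- If a non-empty word v is an internal factor of vv (i.e., there exist non-empty words x and y such that vv = xvy), then there exist a non-empty word t and integers i, j ≥ 1 such that x = t^i, y = t^j, and v = t^(i+j). -/
/-!
Since |v| = |x| + |y|, the word x is a prefix of v, say v = x u; cancelling x in v v = x v y
leaves (u x) u = (x u) y, so u = y and x y = y x. Commuting words are powers of a common word:
if x w = w x and |x| ≤ |w|, then w = x u with x u = u x, and induction on |x| + |w| applies.
-/

/-- n-fold power of a word (list) under concatenation. -/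
def wpow {α : Type*} (u : List α) (n : ℕ) : List α := (List.replicate n u).flatten

section

variable {α : Type*}

theorem wpow_add (t : List α) (i j : ℕ) : wpow t (i + j) = wpow t i ++ wpow t j := by
  rw [wpow, List.replicate_add, List.flatten_append]; rfl

theorem wpow_eq_nil_iff {t : List α} {i : ℕ} : wpow t i = [] ↔ t = [] ∨ i = 0 := by
  cases i <;> simp [wpow]

namespace List

theorem exists_eq_wpow_of_append_comm {x w : List α} (hc : x ++ w = w ++ x) :
    ∃ (t : List α) (i j : ℕ), x = wpow t i ∧ w = wpow t j := by
  induction hn : x.length + w.length using Nat.strong_induction_on generalizing x w with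
  | _ n ih =>
  wlog hle : x.length ≤ w.length generalizing x w
  · obtain ⟨t, i, j, hw, hx⟩ := this hc.symm (by omega) (by omega)
    exact ⟨t, j, i, hx, hw⟩
  rcases eq_or_ne x [] with rfl | hx
  · exact ⟨w, 0, 1, by simp [wpow], by simp [wpow]⟩
  obtain ⟨u, rfl⟩ : x <+: w :=
    prefix_of_prefix_length_le (hc ▸ prefix_append x w) (prefix_append w x) hle
  have hcu : x ++ u = u ++ x := by simpa using hc
  obtain ⟨t, i, j, rfl, rfl⟩ := ih _ (by simp [← hn, length_pos_iff.2 hx]) hcu rfl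
  exact ⟨t, i, i + j, rfl, (wpow_add t i j).symm⟩

theorem eq_append_and_comm_of_append_self_eq {v x y : List α} (h : v ++ v = x ++ v ++ y) :
    v = x ++ y ∧ x ++ y = y ++ x := by
  have hlen : v.length = x.length + y.length := by
    have := congrArg length h
    simp only [length_append] at this
    omega
  obtain ⟨u, rfl⟩ : x <+: v :=
    prefix_of_prefix_length_le (h ▸ by simp) (prefix_append v v) (by omega)
  have h' : (u ++ x) ++ u = (x ++ u) ++ y := by simpa using h
  obtain ⟨hcomm, rfl⟩ := append_inj h' (by simp [Nat.add_comm])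
  exact ⟨rfl, hcomm.symm⟩

end List

end

theorem internal_factor_of_square_general {α : Type*} (v x y : List α)
    (hx : x ≠ []) (hy : y ≠ [])
    (h : v ++ v = x ++ v ++ y) :
    ∃ (t : List α) (i j : ℕ), t ≠ [] ∧ 1 ≤ i ∧ 1 ≤ j ∧
      x = wpow t i ∧ y = wpow t j ∧ v = wpow t (i + j) := by
  obtain ⟨rfl, hcomm⟩ := List.eq_append_and_comm_of_append_self_eq h
  obtain ⟨t, i, j, rfl, rfl⟩ := List.exists_eq_wpow_of_append_comm hcomm
  rw [Ne, wpow_eq_nil_iff, not_or] at hx hy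
  exact ⟨t, i, j, hx.1, by omega, by omega, rfl, rfl, (wpow_add t i j).symm⟩

theorem internal_factor_of_square {α : Type*} (v x y : List α)
    (hv : v ≠ []) (hx : x ≠ []) (hy : y ≠ [])
    (h : v ++ v = x ++ v ++ y) :
    ∃ (t : List α) (i j : ℕ), t ≠ [] ∧ 1 ≤ i ∧ 1 ≤ j ∧
      x = wpow t i ∧ y = wpow t j ∧ v = wpow t (i + j) :=
  internal_factor_of_square_general v x y hx hy h
end

section
/- Let x and y be words. If a power x^m of x and a power y^n of y have a common factor of length at least |x| + |y| - gcd(|x|, |y|), then there exist words t1 and t2 such that x is a power of t1·t2 and y is a power of t2·t1. -/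
/-!
Fine–Wilf: a word of length at least `a + b - gcd a b` with periods `a` and `b` has period
`gcd a b`. For `a < b`, dropping the last `a` letters leaves a word with periods `a` and `b - a`,
so Euclid's subtractive algorithm on the periods reduces everything to the case `a = b`.

A factor `c` of `x ^ m` is a prefix of `x' ^ m` for a conjugate `x'` of `x`, since rotating
`x ^ m` rotates each copy of `x`. Hence `c` has the periods `|x|` and `|y|`, so also
`g = gcd |x| |y|`, and the conjugates `x'`, `y'` are powers of the prefix `u` of `c` of length `g`.
Then `x` and `y` are powers of two conjugates of `u`, which are of the form `t₁ t₂` and `t₂ t₁`.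
-/

def IsPeriodOn {β : Type*} (w : ℕ → β) (N p : ℕ) : Prop := ∀ i, i + p < N → w (i + p) = w i

namespace IsPeriodOn

variable {β : Type*} {w : ℕ → β} {N p a b : ℕ}

theorem iff_apply_mod : IsPeriodOn w N p ↔ ∀ i < N, w i = w (i % p) := by
  refine ⟨fun h i hi => ?_, fun h i hi => ?_⟩
  · obtain rfl | hp := p.eq_zero_or_pos
    · rw [Nat.mod_zero]
    induction i using Nat.strong_induction_on with
    | _ i ih =>
      rcases lt_or_ge i p with hip | hip
      · rw [Nat.mod_eq_of_lt hip]
      · obtain ⟨j, rfl⟩ := Nat.exists_eq_add_of_le' hip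
        rw [h j hi, ih j (by omega) (by omega), Nat.add_mod_right]
  · rw [h _ hi, h i (by omega), Nat.add_mod_right]

theorem mono (h : IsPeriodOn w N p) {M : ℕ} (hM : M ≤ N) : IsPeriodOn w M p :=
  fun i hi => h i (by omega)

theorem sub (ha : IsPeriodOn w N a) (hb : IsPeriodOn w N b) (hab : a ≤ b) :
    IsPeriodOn w (N - a) (b - a) := fun i hi => by
  rw [← hb i (by omega), ← ha (i + (b - a)) (by omega), Nat.add_assoc, Nat.sub_add_cancel hab]

theorem gcd (ha : IsPeriodOn w N a) (hb : IsPeriodOn w N b) (hN : a + b - Nat.gcd a b ≤ N) :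
    IsPeriodOn w N (Nat.gcd a b) := by
  induction hs : a + b using Nat.strong_induction_on generalizing a b N with
  | _ s ih =>
  wlog hab : a ≤ b generalizing a b
  · rw [Nat.gcd_comm] at hN ⊢
    exact this hb ha (by omega) (by omega) (by omega)
  obtain rfl | ha0 := a.eq_zero_or_pos
  · rwa [Nat.gcd_zero_left]
  obtain rfl | hab := hab.eq_or_lt
  · rwa [Nat.gcd_self]
  have hg : Nat.gcd a (b - a) = Nat.gcd a b := Nat.gcd_sub_self_right hab.le
  have hgb : Nat.gcd a b ≤ b - a := hg ▸ Nat.gcd_le_right _ (by omega)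
  have hrec := ih b (by omega) (ha.mono (Nat.sub_le N a)) (ha.sub hb hab.le) (by omega) (by omega)
  rw [hg, iff_apply_mod] at hrec
  rw [iff_apply_mod] at ha ⊢
  intro i hi
  -- `i % a < a ≤ N - a` because `N ≥ a + b - gcd a b ≥ 2 a`
  rw [ha i hi, hrec _ (by have := Nat.mod_lt i ha0; omega),
    Nat.mod_mod_of_dvd _ (Nat.gcd_dvd_left a b)]

end IsPeriodOn

section Words

variable {α : Type*}

theorem wpow_succ (u : List α) (k : ℕ) : wpow u (k + 1) = u ++ wpow u k := by
  simp [wpow, List.replicate_succ]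

theorem length_wpow (u : List α) (k : ℕ) : (wpow u k).length = k * u.length := by
  simp [wpow]

theorem getElem?_wpow {u : List α} {k i : ℕ} (hi : i < k * u.length) :
    (wpow u k)[i]? = u[i % u.length]? := by
  induction k generalizing i with
  | zero => simp at hi
  | succ k ih =>
    rw [wpow_succ]
    rcases lt_or_ge i u.length with h | h
    · rw [List.getElem?_append_left h, Nat.mod_eq_of_lt h]
    · rw [List.getElem?_append_right h, ih (by rw [Nat.succ_mul] at hi; omega),
        ← Nat.mod_eq_sub_mod h]

theorem rotate_wpow (u : List α) (k j : ℕ) : (wpow u k).rotate j = wpow (u.rotate j) k := by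
  apply List.ext_getElem?
  intro i
  rcases lt_or_ge i (k * u.length) with hi | hi
  · have hu : 0 < u.length := Nat.pos_of_mul_pos_left (Nat.zero_lt_of_lt hi)
    rw [List.getElem?_rotate (by rwa [length_wpow]), length_wpow,
      getElem?_wpow (Nat.mod_lt _ (by omega)), Nat.mod_mod_of_dvd _ (Nat.dvd_mul_left _ _),
      getElem?_wpow (by rwa [List.length_rotate]), List.length_rotate,
      List.getElem?_rotate (Nat.mod_lt _ hu), Nat.mod_add_mod]
  · rw [List.getElem?_eq_none (by simpa [length_wpow] using hi),
      List.getElem?_eq_none (by simpa [length_wpow] using hi)]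

theorem List.IsRotated.exists_append_eq {l l' : List α} (h : l ~r l') :
    ∃ t₁ t₂, l = t₁ ++ t₂ ∧ l' = t₂ ++ t₁ := by
  obtain ⟨n, hn, rfl⟩ := List.isRotated_iff_mod.1 h
  exact ⟨l.take n, l.drop n, (l.take_append_drop n).symm, List.rotate_eq_drop_append_take hn⟩

theorem List.IsRotated.exists_eq_wpow {u w : List α} {k : ℕ} (h : wpow u k ~r w) :
    ∃ v, u ~r v ∧ w = wpow v k := by
  obtain ⟨j, rfl⟩ := h
  exact ⟨u.rotate j, ⟨j, rfl⟩, rotate_wpow u k j⟩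

theorem List.IsInfix.exists_isRotated_prefix_wpow {w x : List α} {m : ℕ}
    (h : w <:+: wpow x m) : ∃ x', x' ~r x ∧ w <+: wpow x' m := by
  obtain ⟨p, s, hps⟩ := h
  refine ⟨x.rotate p.length, List.IsRotated.forall x _, s ++ p, ?_⟩
  rw [← rotate_wpow, ← hps, List.append_assoc, List.rotate_append_length_eq, List.append_assoc]

theorem getElem?_of_prefix_wpow {w v : List α} {m i : ℕ} (h : w <+: wpow v m)
    (hi : i < w.length) : w[i]? = v[i % v.length]? := by
  obtain ⟨t, ht⟩ := h
  have hlen := congrArg List.length ht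
  rw [List.length_append, length_wpow] at hlen
  rw [← getElem?_wpow (k := m) (by omega), ← ht, List.getElem?_append_left hi]

theorem isPeriodOn_of_prefix_wpow {w v : List α} {m : ℕ} (h : w <+: wpow v m) :
    IsPeriodOn (w[·]?) w.length v.length := by
  rw [IsPeriodOn.iff_apply_mod]
  intro i hi
  rw [getElem?_of_prefix_wpow h hi,
    getElem?_of_prefix_wpow h (lt_of_le_of_lt (Nat.mod_le i v.length) hi), Nat.mod_mod]

theorem take_mul_eq_wpow_take {w : List α} {g k : ℕ} (h : IsPeriodOn (w[·]?) w.length g)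
    (hk : g * k ≤ w.length) : w.take (g * k) = wpow (w.take g) k := by
  obtain rfl | hk0 := k.eq_zero_or_pos
  · simp [wpow]
  have hu : (w.take g).length = g :=
    List.length_take_of_le (le_trans (Nat.le_mul_of_pos_right g hk0) hk)
  rw [IsPeriodOn.iff_apply_mod] at h
  apply List.ext_getElem?
  intro i
  rcases lt_or_ge i (g * k) with hi | hi
  · rw [List.getElem?_take_of_lt hi, getElem?_wpow (by rwa [hu, Nat.mul_comm]), hu,
      List.getElem?_take_of_lt (Nat.mod_lt _ (Nat.pos_of_mul_pos_right (Nat.zero_lt_of_lt hi))),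
      h i (by omega)]
  · rw [List.getElem?_eq_none (by rw [List.length_take]; omega),
      List.getElem?_eq_none (by rwa [length_wpow, hu, Nat.mul_comm])]

theorem eq_wpow_take_of_prefix_wpow {w v : List α} {g m : ℕ} (h : w <+: wpow v m)
    (hper : IsPeriodOn (w[·]?) w.length g) (hg : g ∣ v.length) (hv : v.length ≤ w.length) :
    v = wpow (w.take g) (v.length / g) := by
  have hv' : g * (v.length / g) = v.length := Nat.mul_div_cancel' hg
  rw [← take_mul_eq_wpow_take hper (by rwa [hv']), hv']
  obtain ⟨t, ht⟩ := h
  apply List.ext_getElem?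
  intro i
  rcases lt_or_ge i v.length with hi | hi
  · rw [List.getElem?_take_of_lt hi, getElem?_of_prefix_wpow ⟨t, ht⟩ (by omega),
      Nat.mod_eq_of_lt hi]
  · rw [List.getElem?_eq_none hi, List.getElem?_eq_none (by rw [List.length_take]; omega)]

end Words

theorem fine_wilf_common_factor {α : Type*} (x y : List α) (m n : ℕ) (c : List α)
    (hcx : c <:+: wpow x m) (hcy : c <:+: wpow y n)
    (hlen : x.length + y.length - Nat.gcd x.length y.length ≤ c.length) :
    ∃ (t1 t2 : List α) (p q : ℕ), x = wpow (t1 ++ t2) p ∧ y = wpow (t2 ++ t1) q := by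
  obtain rfl | hx := eq_or_ne x []
  · exact ⟨[], y, 0, 1, rfl, by simp [wpow]⟩
  obtain rfl | hy := eq_or_ne y []
  · exact ⟨x, [], 1, 0, by simp [wpow], rfl⟩
  obtain ⟨x', hx'x, hcx'⟩ := hcx.exists_isRotated_prefix_wpow
  obtain ⟨y', hy'y, hcy'⟩ := hcy.exists_isRotated_prefix_wpow
  have hx0 : 0 < x'.length := hx'x.perm.length_eq ▸ List.length_pos_iff.2 hx
  have hy0 : 0 < y'.length := hy'y.perm.length_eq ▸ List.length_pos_iff.2 hy
  rw [← hx'x.perm.length_eq, ← hy'y.perm.length_eq] at hlen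
  have hper := (isPeriodOn_of_prefix_wpow hcx').gcd (isPeriodOn_of_prefix_wpow hcy') hlen
  have hx' := eq_wpow_take_of_prefix_wpow hcx' hper (Nat.gcd_dvd_left _ _)
    (by have := Nat.le_of_dvd hy0 (Nat.gcd_dvd_right x'.length _); omega)
  have hy' := eq_wpow_take_of_prefix_wpow hcy' hper (Nat.gcd_dvd_right _ _)
    (by have := Nat.le_of_dvd hx0 (Nat.gcd_dvd_left _ y'.length); omega)
  obtain ⟨v₁, hv₁, hxv₁⟩ := (hx' ▸ hx'x).exists_eq_wpow
  obtain ⟨v₂, hv₂, hyv₂⟩ := (hy' ▸ hy'y).exists_eq_wpow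
  obtain ⟨t₁, t₂, rfl, rfl⟩ := (hv₁.symm.trans hv₂).exists_append_eq
  exact ⟨t₁, t₂, _, _, hxv₁, hyv₂⟩
end

section
/- Let f be a morphism from A* to B* with the property: whenever f(a) = ps, f(b) = ps', f(c) = p's for letters a, b, c ∈ A (possibly c = b) and words p, s, s', p' ∈ B*, then b = a or c = a (i.e., f is a ps-morphism). Then f restricted to non-empty words is injective, provided f(a) ≠ ε for all letters a. -/
/-! Taking `c = b` and `s = []` in the ps-property shows that no letter image is a prefix of the
image of another letter, so the images form a prefix code. Two factorisations of the same image
then agree letter by letter: the first images are comparable for the prefix order, hence equal,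
and they cancel. Non-emptiness of the images rules out one word running out before the other. -/

/-- Extension of a letter map to a morphism of free monoids. -/
def applyMorph {α β : Type*} (g : α → List β) (w : List α) : List β := w.flatMap g

namespace applyMorph

variable {α β : Type*} (g : α → List β)

@[simp]
theorem nil : applyMorph g [] = [] := rfl

@[simp]
theorem cons (a : α) (w : List α) : applyMorph g (a :: w) = g a ++ applyMorph g w := rfl

theorem eq_nil_iff (hne : ∀ a, g a ≠ []) {w : List α} : applyMorph g w = [] ↔ w = [] := by
  cases w with
  | nil => simp
  | cons a w => simp [hne a]

theorem injective_of_prefix_eq (hpre : ∀ a b, g a <+: g b → a = b) (hne : ∀ a, g a ≠ []) :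
    Function.Injective (applyMorph g) := by
  intro u
  induction u with
  | nil => exact fun v h => ((eq_nil_iff g hne).1 h.symm).symm
  | cons a u ih =>
    intro v h
    cases v with
    | nil => exact (eq_nil_iff g hne).1 h
    | cons b v =>
      rw [cons, cons] at h
      have hab : a = b := by
        rcases List.prefix_or_prefix_of_prefix (List.prefix_append (g a) _)
            (h ▸ List.prefix_append (g b) _) with hp | hp
        · exact hpre a b hp
        · exact (hpre b a hp).symm
      subst hab
      rw [ih (List.append_cancel_left h)]

end applyMorph

theorem prefix_eq_of_ps {α β : Type*} {g : α → List β}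
    (hps : ∀ (a b c : α) (p s s' p' : List β),
      g a = p ++ s → g b = p ++ s' → g c = p' ++ s → b = a ∨ c = a)
    {a b : α} (h : g a <+: g b) : a = b := by
  obtain ⟨t, ht⟩ := h
  exact (hps a b b (g a) [] t (g b) (by simp) ht.symm (by simp)).elim Eq.symm Eq.symm

theorem ps_morphism_injective {α β : Type*} (g : α → List β)
    (hps : ∀ (a b c : α) (p s s' p' : List β),
      g a = p ++ s → g b = p ++ s' → g c = p' ++ s → b = a ∨ c = a)
    (hne : ∀ a : α, g a ≠ []) :
    ∀ u v : List α, u ≠ [] → v ≠ [] → applyMorph g u = applyMorph g v → u = v :=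
  fun _ _ _ _ h => applyMorph.injective_of_prefix_eq g (fun _ _ => prefix_eq_of_ps hps) hne h
end

section
/- In a synchronized decomposition of u^k in f(w) under a uniform morphism f (i.e., |s_i| = |s_{i+1}| for some 1 ≤ i ≤ k-2), one has |s_i| = |s_j| and p_i = p_j for all 1 ≤ i < j ≤ k-1; moreover p_k = p_1. -/
/-- A word is k-power-free if it contains no factor `u^k` with `u` non-empty. -/
def kPowerFree {α : Type*} (k : ℕ) (w : List α) : Prop :=
  ∀ u : List α, u ≠ [] → ¬ (wpow u k <:+: w)

theorem synchronized_properties {α β : Type*} (g : α → List β) (L k : ℕ)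
    (hL : 1 ≤ L) (hk : 3 ≤ k)
    (huniform : ∀ b : α, (g b).length = L)
    (u : List β) (hu : u ≠ []) (w : List α)
    (p s : ℕ → List β) (a : ℕ → α) (ws : ℕ → List α)
    (hw : w = [a 0] ++ (List.range k).flatMap (fun i => ws (i+1) ++ [a (i+1)]))
    (him : ∀ i ≤ k, g (a i) = p i ++ s i)
    (hs0 : s 0 ≠ [])
    (hp : ∀ i, 1 ≤ i → i ≤ k → p i ≠ [])
    (hu' : ∀ i, 1 ≤ i → i ≤ k → u = s (i-1) ++ applyMorph g (ws i) ++ p i)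
    (hsync : ∃ i, 1 ≤ i ∧ i ≤ k - 2 ∧ (s i).length = (s (i+1)).length) :
    (∀ i j, 1 ≤ i → i < j → j ≤ k - 1 → (s i).length = (s j).length ∧ p i = p j) ∧
    p k = p 1 := by
  -- length of applyMorph
  have hlen : ∀ l : List α, (applyMorph g l).length = L * l.length := by
    intro l
    induction l with
    | nil => simp [applyMorph]
    | cons x xs ih =>
      simp only [applyMorph, List.flatMap_cons, List.length_append] at *
      rw [ih, huniform, List.length_cons, Nat.mul_succ]; omega
  -- p i ++ s i has length L
  have hps : ∀ i ≤ k, (p i).length + (s i).length = L := by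
    intro i hi
    have := congrArg List.length (him i hi)
    simpa [huniform] using this.symm
  -- key equation
  have hkey : ∀ i, 1 ≤ i → i ≤ k →
      u.length + (s i).length = (s (i-1)).length + L * ((ws i).length + 1) := by
    intro i h1 h2
    have h := congrArg List.length (hu' i h1 h2)
    simp only [List.length_append, hlen] at h
    have hmul : L * ((ws i).length + 1) = L * (ws i).length + L := by ring
    have := hps i h2
    omega
  -- s i is short for 1 ≤ i ≤ k
  have hshort : ∀ i, 1 ≤ i → i ≤ k → (s i).length < L := by
    intro i h1 h2
    have hpi := hp i h1 h2
    have h3 := hps i h2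
    have : 0 < (p i).length := List.length_pos_iff.mpr hpi
    omega
  -- L divides u.length
  obtain ⟨i0, hi01, hi02, hi0⟩ := hsync
  have hdvd : L ∣ u.length := by
    have h := hkey (i0 + 1) (by omega) (by omega)
    simp only [Nat.add_sub_cancel] at h
    exact ⟨(ws (i0+1)).length + 1, by omega⟩
  -- all lengths equal
  have hstep : ∀ i, 2 ≤ i → i ≤ k → (s (i-1)).length = (s i).length := by
    intro i h1 h2
    have h := hkey i (by omega) h2
    have ha := hshort (i-1) (by omega) (by omega)
    have hb := hshort i (by omega) h2
    obtain ⟨m, hm⟩ := hdvd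
    have : (s i).length % L = (s (i-1)).length % L := by
      have : (u.length + (s i).length) % L = ((s (i-1)).length + L * ((ws i).length + 1)) % L := by
        rw [h]
      simpa [hm, Nat.add_mul_mod_self_left, Nat.mul_mod_right, Nat.mul_add_mod] using this
    rw [Nat.mod_eq_of_lt ha, Nat.mod_eq_of_lt hb] at this
    omega
  have hall : ∀ i, 1 ≤ i → i ≤ k → (s i).length = (s 1).length := by
    intro i
    induction i with
    | zero => omega
    | succ n ih =>
      intro h1 h2
      rcases Nat.eq_or_lt_of_le h1 with h | h
      · simp [← h]
      · have := hstep (n+1) (by omega) h2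
        simp only [Nat.add_sub_cancel] at this
        rw [← this, ih (by omega) (by omega)]
  -- p's are equal: common suffix of u of equal length
  have hpeq : ∀ i j, 1 ≤ i → i ≤ k → 1 ≤ j → j ≤ k → p i = p j := by
    intro i j hi1 hi2 hj1 hj2
    have h1 := hu' i hi1 hi2
    have h2 := hu' j hj1 hj2
    have hlp : (p i).length = (p j).length := by
      have e1 := hps i hi2
      have e2 := hps j hj2
      have := hall i hi1 hi2
      have := hall j hj1 hj2
      omega
    have heq : (s (i-1) ++ applyMorph g (ws i)) ++ p i
        = (s (j-1) ++ applyMorph g (ws j)) ++ p j := by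
      exact h1.symm.trans h2
    have hll : (s (i-1) ++ applyMorph g (ws i)).length
        = (s (j-1) ++ applyMorph g (ws j)).length := by
      have := congrArg List.length heq
      simp only [List.length_append] at this ⊢
      omega
    exact List.append_inj_right heq hll
  refine ⟨fun i j hi hij hj => ⟨?_, ?_⟩, hpeq k 1 (by omega) le_rfl (by omega) (by omega)⟩
  · rw [hall i hi (by omega), hall j (by omega) (by omega)]
  · exact hpeq i j hi (by omega) (by omega) (by omega)
end

section
/- Let f be an injective uniform morphism on A with images of letters of length L, and let u^k have a decomposition (p_i, s_i, a_i, w_i)_{i=0,...,k} in f(w). Suppose there exist 1 ≤ ℓ ≤ k and a letter a such that w_ℓ = x_ℓ y_ℓ z_ℓ where both x_ℓ and y_ℓ end with a. Then for every 1 ≤ i ≤ k there exist words x_i, y_i, z_i with w_i = x_i y_i z_i, |s_{ℓ-1} f(x_ℓ)| - L < |s_{i-1} f(x_i)| ≤ |s_{ℓ-1} f(x_ℓ)|, and |y_i| = |y_ℓ|. -/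
theorem reduction_factorizations {α β : Type*} (g : α → List β) (L k : ℕ)
    (huniform : ∀ b : α, (g b).length = L)
    (hinj : Function.Injective (applyMorph g))
    (u : List β) (hu : u ≠ []) (w : List α)
    (p s : ℕ → List β) (a : ℕ → α) (ws : ℕ → List α)
    (hw : w = [a 0] ++ (List.range k).flatMap (fun i => ws (i+1) ++ [a (i+1)]))
    (him : ∀ i ≤ k, g (a i) = p i ++ s i)
    (hs0 : s 0 ≠ [])
    (hp : ∀ i, 1 ≤ i → i ≤ k → p i ≠ [])
    (hu' : ∀ i, 1 ≤ i → i ≤ k → u = s (i-1) ++ applyMorph g (ws i) ++ p i)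
    (l : ℕ) (hl1 : 1 ≤ l) (hlk : l ≤ k)
    (b : α) (xl yl zl : List α)
    (hwl : ws l = xl ++ yl ++ zl)
    (hxl : ∃ x', xl = x' ++ [b]) (hyl : ∃ y', yl = y' ++ [b]) :
    ∀ i, 1 ≤ i → i ≤ k → ∃ x y z : List α,
      ws i = x ++ y ++ z ∧
      (s (l-1) ++ applyMorph g xl).length - L < (s (i-1) ++ applyMorph g x).length ∧
      (s (i-1) ++ applyMorph g x).length ≤ (s (l-1) ++ applyMorph g xl).length ∧
      y.length = yl.length := by
  intro i hi1 hik
  -- L is positive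
  have hL : 1 ≤ L := by
    rcases Nat.eq_zero_or_pos L with h0 | h
    · exfalso
      have hg : g (a 0) = [] := List.eq_nil_of_length_eq_zero (by rw [huniform, h0])
      have : applyMorph g [a 0] = applyMorph g [] := by simp [applyMorph, hg]
      have := hinj this
      simp at this
    · exact h
  -- length of image of a word
  have hflat : ∀ v : List α, (applyMorph g v).length = L * v.length := by
    intro v
    induction v with
    | nil => simp [applyMorph]
    | cons c t ih =>
      simp only [applyMorph, List.flatMap_cons, List.length_append, List.length_cons] at ih ⊢
      rw [huniform, ih]; ring
  -- basic numeric facts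
  have h1 : (p (i-1)).length + (s (i-1)).length = L := by
    have := congrArg List.length (him (i-1) (by omega))
    simp only [huniform, List.length_append] at this
    omega
  have h1l : (p (l-1)).length + (s (l-1)).length = L := by
    have := congrArg List.length (him (l-1) (by omega))
    simp only [huniform, List.length_append] at this
    omega
  have h2 : (p i).length + (s i).length = L := by
    have := congrArg List.length (him i hik)
    simp only [huniform, List.length_append] at this
    omega
  have h4 : 1 ≤ (p l).length := List.length_pos_iff.mpr (hp l hl1 hlk)
  have h5 : (s (i-1)).length + L * (ws i).length + (p i).length
      = (s (l-1)).length + L * (ws l).length + (p l).length := by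
    have e := (hu' i hi1 hik).symm.trans (hu' l hl1 hlk)
    have := congrArg List.length e
    simp only [List.length_append, hflat] at this
    omega
  have h6 : (ws l).length = xl.length + yl.length + zl.length := by
    rw [hwl]; simp [Nat.add_assoc]
  have h7 : 1 ≤ xl.length := by
    obtain ⟨x', rfl⟩ := hxl; simp
  have h8 : L ≤ L * xl.length := Nat.le_mul_of_pos_right L h7
  have h10 : L * (ws l).length = L * xl.length + L * yl.length + L * zl.length := by
    rw [h6]; ring
  obtain ⟨m, hm1, hm2⟩ : ∃ m : ℕ,
      L * m ≤ (s (l-1)).length + L * xl.length - (s (i-1)).length ∧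
      (s (l-1)).length + L * xl.length - (s (i-1)).length < L * m + L := by
    refine ⟨((s (l-1)).length + L * xl.length - (s (i-1)).length) / L, ?_, ?_⟩ <;>
    · have := Nat.div_add_mod ((s (l-1)).length + L * xl.length - (s (i-1)).length) L
      have := Nat.mod_lt ((s (l-1)).length + L * xl.length - (s (i-1)).length)
        (show 0 < L by omega)
      omega
  have hSiN : (s (i-1)).length ≤ (s (l-1)).length + L * xl.length := by omega
  -- the chosen split fits inside ws i
  have hkey : L * m + L * yl.length < L * (ws i).length + L := by omega
  have hfit : m + yl.length ≤ (ws i).length := by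
    have h11 : L * (m + yl.length) < L * ((ws i).length + 1) := by
      rw [Nat.mul_add, Nat.mul_add, Nat.mul_one]; omega
    have := Nat.lt_of_mul_lt_mul_left h11
    omega
  have hmWi : m ≤ (ws i).length := by omega
  refine ⟨(ws i).take m, ((ws i).drop m).take yl.length, ((ws i).drop m).drop yl.length,
    ?_, ?_, ?_, ?_⟩
  · rw [List.append_assoc, List.take_append_drop, List.take_append_drop]
  · simp only [List.length_append, hflat, List.length_take, Nat.min_eq_left hmWi]
    omega
  · simp only [List.length_append, hflat, List.length_take, Nat.min_eq_left hmWi]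
    omega
  · simp only [List.length_take, List.length_drop]
    omega
end

section
/- (Reduction lemma) Let f be an injective L-uniform morphism and u^k have a (p_i, s_i, a_i, w_i)-decomposition in f(w). Suppose w_ℓ = x_ℓ y_ℓ z_ℓ with x_ℓ and y_ℓ both ending with the same letter a, and let w_i = x_i y_i z_i be the induced factorizations (with |y_i| = |y_ℓ| and |s_{ℓ-1}f(x_ℓ)| - L < |s_{i-1}f(x_i)| ≤ |s_{ℓ-1}f(x_ℓ)|). Set u' = s_{ℓ-1} f(x_ℓ z_ℓ) p_ℓ and w' = a_0 · ∏_{i=1}^{k} (x_i z_i a_i). Then (u')^k has the decomposition (p_i, s_i, a_i, x_i z_i)_{i=0,...,k} in f(w'), and |w'| < |w|. -/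
lemma applyMorph_append {α β : Type*} (g : α → List β) (v w : List α) :
    applyMorph g (v ++ w) = applyMorph g v ++ applyMorph g w := by
  simp [applyMorph]

lemma applyMorph_length {α β : Type*} (g : α → List β) {L : ℕ}
    (huniform : ∀ b : α, (g b).length = L) (w : List α) :
    (applyMorph g w).length = w.length * L := by
  induction w with
  | nil => simp [applyMorph]
  | cons a t ih =>
      simp only [applyMorph, List.flatMap_cons, List.length_append, List.length_cons,
        huniform a] at *
      rw [ih]; ring

lemma core {β : Type*} (P E F Q R P2 M2 R2 : List β)
    (h : P ++ ((E ++ F) ++ (Q ++ ((E ++ F) ++ R))) = P2 ++ (M2 ++ R2))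
    (hP2 : P2.length = P.length + E.length)
    (hM2 : M2.length = F.length + Q.length + E.length) :
    P2 ++ R2 = (P ++ (E ++ F)) ++ R := by
  have h1 : (P ++ E) ++ (((F ++ Q) ++ E) ++ (F ++ R)) = P2 ++ (M2 ++ R2) := by
    simpa [List.append_assoc] using h
  obtain ⟨hPE, hrest⟩ := List.append_inj h1 (by simp [hP2])
  obtain ⟨_, hR2⟩ := List.append_inj hrest (by simp [hM2]; omega)
  rw [← hPE, ← hR2]
  simp [List.append_assoc]

theorem reduction_lemma {α β : Type*} (g : α → List β) (L k : ℕ)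
    (huniform : ∀ b : α, (g b).length = L)
    (hinj : Function.Injective (applyMorph g))
    (u : List β) (hu : u ≠ []) (w : List α)
    (p s : ℕ → List β) (a : ℕ → α) (ws : ℕ → List α)
    (hw : w = [a 0] ++ (List.range k).flatMap (fun i => ws (i+1) ++ [a (i+1)]))
    (him : ∀ i ≤ k, g (a i) = p i ++ s i)
    (hs0 : s 0 ≠ [])
    (hp : ∀ i, 1 ≤ i → i ≤ k → p i ≠ [])
    (hu' : ∀ i, 1 ≤ i → i ≤ k → u = s (i-1) ++ applyMorph g (ws i) ++ p i)
    (l : ℕ) (hl1 : 1 ≤ l) (hlk : l ≤ k)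
    (b : α) (x y z : ℕ → List α)
    (hfact : ∀ i, 1 ≤ i → i ≤ k → ws i = x i ++ y i ++ z i)
    (hxl : ∃ x', x l = x' ++ [b]) (hyl : ∃ y', y l = y' ++ [b])
    (hylen : ∀ i, 1 ≤ i → i ≤ k → (y i).length = (y l).length)
    (hxlen : ∀ i, 1 ≤ i → i ≤ k →
      (s (l-1) ++ applyMorph g (x l)).length - L
          < (s (i-1) ++ applyMorph g (x i)).length ∧
      (s (i-1) ++ applyMorph g (x i)).length ≤ (s (l-1) ++ applyMorph g (x l)).length) :
    (∀ i, 1 ≤ i → i ≤ k →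
      s (l-1) ++ applyMorph g (x l ++ z l) ++ p l
        = s (i-1) ++ applyMorph g (x i ++ z i) ++ p i) ∧
    ([a 0] ++ (List.range k).flatMap
        (fun i => x (i+1) ++ z (i+1) ++ [a (i+1)])).length < w.length := by
  obtain ⟨x', hx'⟩ := hxl
  obtain ⟨y', hy'⟩ := hyl
  have hL : 0 < L := by
    have := (hxlen l hl1 hlk).1
    omega
  constructor
  · intro i h1 hk
    -- abbreviations
    set P : List β := s (l-1) ++ applyMorph g x' with hP
    have hgxl : applyMorph g (x l) = applyMorph g x' ++ g b := by
      rw [hx', applyMorph_append]; simp [applyMorph]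
    have hgyl : applyMorph g (y l) = applyMorph g y' ++ g b := by
      rw [hy', applyMorph_append]; simp [applyMorph]
    -- m_l and m_i
    have hml : (s (l-1) ++ applyMorph g (x l)).length = P.length + L := by
      simp [hP, hgxl, huniform b]; omega
    set mi := (s (i-1) ++ applyMorph g (x i)).length with hmi
    have hrange : P.length < mi ∧ mi ≤ P.length + L := by
      have h := hxlen i h1 hk
      rw [hml] at h
      omega
    set E : List β := (g b).take (mi - P.length) with hE
    set F : List β := (g b).drop (mi - P.length) with hF
    have hEF : E ++ F = g b := List.take_append_drop _ _
    have hElen : E.length = mi - P.length := by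
      simp [hE, huniform b]; omega
    have hFlen : F.length = L - (mi - P.length) := by
      simp [hF, huniform b]
    -- the two decompositions of u
    have hul : u = P ++ ((E ++ F) ++ (applyMorph g y' ++ ((E ++ F) ++
        (applyMorph g (z l) ++ p l)))) := by
      rw [hu' l hl1 hlk, hfact l hl1 hlk, applyMorph_append, applyMorph_append,
        hgxl, hgyl, hEF]
      simp [hP, List.append_assoc]
    have hui : u = (s (i-1) ++ applyMorph g (x i)) ++ (applyMorph g (y i) ++
        (applyMorph g (z i) ++ p i)) := by
      rw [hu' i h1 hk, hfact i h1 hk, applyMorph_append, applyMorph_append]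
      simp [List.append_assoc]
    have hkey := core P E F (applyMorph g y') (applyMorph g (z l) ++ p l)
      (s (i-1) ++ applyMorph g (x i)) (applyMorph g (y i))
      (applyMorph g (z i) ++ p i)
      (by rw [← hul, hui])
      (by omega)
      (by
        rw [applyMorph_length g huniform, applyMorph_length g huniform,
          hylen i h1 hk, hy']
        simp [Nat.add_mul]
        omega)
    rw [hEF] at hkey
    rw [applyMorph_append, applyMorph_append, hgxl]
    calc s (l-1) ++ (applyMorph g x' ++ g b ++ applyMorph g (z l)) ++ p l
        = (P ++ g b) ++ (applyMorph g (z l) ++ p l) := by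
          simp [hP, List.append_assoc]
      _ = (s (i-1) ++ applyMorph g (x i)) ++ (applyMorph g (z i) ++ p i) := hkey.symm
      _ = s (i-1) ++ (applyMorph g (x i) ++ applyMorph g (z i)) ++ p i := by
          simp [List.append_assoc]
  · rw [hw]
    simp only [List.length_append, List.length_flatMap, List.map_map, Function.comp_def]
    have hsum : ∀ (f : ℕ → ℕ), ((List.range k).map f).sum = ∑ j ∈ Finset.range k, f j :=
      fun f => rfl
    have h1 : ((List.range k).map (fun i => (x (i+1) ++ z (i+1) ++ [a (i+1)]).length)).sum
        < ((List.range k).map (fun i => (ws (i+1) ++ [a (i+1)]).length)).sum := by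
      rw [hsum, hsum]
      apply Finset.sum_lt_sum_of_nonempty
      · exact Finset.nonempty_range_iff.mpr (by omega)
      · intro j hj
        have hj' : j + 1 ≤ k := by
          have := Finset.mem_range.mp hj; omega
        have := hfact (j+1) (by omega) hj'
        have hy1 : 0 < (y (j+1)).length := by
          rw [hylen (j+1) (by omega) hj', hy']; simp
        simp [this]
        omega
    simp only [List.length_append] at h1
    omega
end

section
/- Let f be a uniform morphism with letter-image length L ≥ 1, k ≥ 3, and suppose u^k has a non-synchronized decomposition (p_i, s_i, a_i, w_i)_{i=0,...,k} in f(w) (meaning |s_i| ≠ |s_{i+1}| for all 1 ≤ i ≤ k-2). Then |u| is not divisible by L. -/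
theorem nonsynchronized_length_not_dvd {α β : Type*} (g : α → List β) (L k : ℕ)
    (hL : 1 ≤ L) (hk : 3 ≤ k)
    (huniform : ∀ b : α, (g b).length = L)
    (u : List β) (hu : u ≠ []) (w : List α)
    (p s : ℕ → List β) (a : ℕ → α) (ws : ℕ → List α)
    (hw : w = [a 0] ++ (List.range k).flatMap (fun i => ws (i+1) ++ [a (i+1)]))
    (him : ∀ i ≤ k, g (a i) = p i ++ s i)
    (hs0 : s 0 ≠ [])
    (hp : ∀ i, 1 ≤ i → i ≤ k → p i ≠ [])
    (hu' : ∀ i, 1 ≤ i → i ≤ k → u = s (i-1) ++ applyMorph g (ws i) ++ p i)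
    (hnonsync : ∀ i, 1 ≤ i → i ≤ k - 2 → (s i).length ≠ (s (i+1)).length) :
    ¬ (L ∣ u.length) := by
  intro hdvd
  have hlenA : ∀ v : List α, (applyMorph g v).length = L * v.length := by
    intro v
    induction v with
    | nil => simp [applyMorph]
    | cons x t ih =>
        simp [applyMorph] at ih ⊢
        rw [ih, huniform]; ring
  have h2 := hu' 2 (by omega) (by omega)
  have hlenu : u.length = (s 1).length + L * (ws 2).length + (p 2).length := by
    rw [h2]; simp [hlenA]; ring
  have e1 : (p 1).length + (s 1).length = L := by
    have := him 1 (by omega)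
    have : (g (a 1)).length = (p 1 ++ s 1).length := by rw [this]
    simpa [huniform] using this.symm
  have e2 : (p 2).length + (s 2).length = L := by
    have := him 2 (by omega)
    have : (g (a 2)).length = (p 2 ++ s 2).length := by rw [this]
    simpa [huniform] using this.symm
  have hp1 : 1 ≤ (p 1).length := List.length_pos_iff.mpr (hp 1 (by omega) (by omega))
  have hp2 : 1 ≤ (p 2).length := List.length_pos_iff.mpr (hp 2 (by omega) (by omega))
  have hd : L ∣ (s 1).length + (p 2).length := by
    have : L ∣ (s 1).length + (p 2).length + L * (ws 2).length := by
      have : (s 1).length + (p 2).length + L * (ws 2).length = u.length := by omega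
      rw [this]; exact hdvd
    exact (Nat.dvd_add_right (Dvd.intro _ rfl)).mp (by rwa [Nat.add_comm] at this)
  obtain ⟨d, hdd⟩ := hd
  have hlt : L * d < L * 2 := by omega
  have hd2 : d < 2 := Nat.lt_of_mul_lt_mul_left hlt
  interval_cases d
  · omega
  · exact hnonsync 1 (by omega) (by omega)
      (by simp only [Nat.reduceAdd]; omega)
end
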